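/- arXiv:1301.2708 — 2 statements merged into one kernel-verified Lean document; each statement's English description precedes it below -/
import Mathlib

section
/- Let n ≥ 2 be an integer and x = (x_1,…,x_n) ∈ ℝ^n. Then p(x, T_n = 2) ≥ (1/(2√2)) · exp( −x̄_n² / 2 ) · p(x, T_n = 1), where x̄_n = (1/n) ∑_{j=1}^n x_j. In particular, since p(x, T_n = 1) = m(x_{1:n})/n, the ratio p(x, T_n = 2)/p(x, T_n = 1) is bounded below by (1/(2√2)) exp(−x̄_n²/2). -/
open MeasureTheory Filter Finset

/-- The standard normal density `φ(u) = (2π)^{-1/2} exp(-u²/2)`. -/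
noncomputable def stdNormalPDF (u : ℝ) : ℝ :=
  (Real.sqrt (2 * Real.pi))⁻¹ * Real.exp (-u ^ 2 / 2)

/-- The single-cluster marginal `m(x_S)` of a unit-variance normal component with
standard normal prior on the mean, in closed form. -/
noncomputable def clusterMarginal {n : ℕ} (x : Fin n → ℝ) (S : Finset (Fin n)) : ℝ :=
  (Real.sqrt (S.card + 1))⁻¹ * (∏ j ∈ S, stdNormalPDF (x j)) *
    Real.exp ((∑ j ∈ S, x j) ^ 2 / (2 * (S.card + 1)))

/-- The set `𝒜_t(n)` of ordered partitions `(A_1, …, A_t)` of `{1,…,n}` into `t`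
nonempty disjoint sets. -/
def orderedPartitions (n t : ℕ) : Finset (Fin t → Finset (Fin n)) :=
  Finset.univ.filter fun A =>
    (∀ i, (A i).Nonempty) ∧ (∀ i j, i ≠ j → Disjoint (A i) (A j)) ∧
      Finset.univ.biUnion A = Finset.univ

/-- The CRP (α = 1) weight `p(A) = (1/(n!·t!)) ∏_i (|A_i| - 1)!` of an ordered partition
of `{1,…,n}` into `t` parts. -/
noncomputable def crpWeight {n t : ℕ} (A : Fin t → Finset (Fin n)) : ℝ :=
  (1 / ((n.factorial : ℝ) * (t.factorial : ℝ))) * ∏ i, (((A i).card - 1).factorial : ℝ)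

/-- The joint law of the data and the number of clusters under the standard normal DPM
with concentration parameter `α = 1`:
`p(x, T_n = t) = ∑_{A ∈ 𝒜_t(n)} p(A) ∏_i m(x_{A_i})`. -/
noncomputable def pJoint (n t : ℕ) (x : Fin n → ℝ) : ℝ :=
  ∑ A ∈ orderedPartitions n t, crpWeight A * ∏ i, clusterMarginal x (A i)

/-- The posterior probability of one cluster,
`p(T_n = 1 | x) = p(x, T_n = 1) / ∑_{t=1}^n p(x, T_n = t)`. -/
noncomputable def posteriorOne (n : ℕ) (x : Fin n → ℝ) : ℝ :=
  pJoint n 1 x / ∑ t ∈ Finset.Icc 1 n, pJoint n t x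

/-!
Among the two-cluster partitions are the `n` splits `({k}, {k}ᶜ)`, each of CRP weight
`1 / (2n(n-1))`, while the one-cluster term is `m(x) / n`. The marginals `m(x_{k}) m(x_{k}ᶜ)` and
`m(x)` share the factor `∏ φ(x_j)`, so with `s = ∑ x_j` only the exponents need comparing:
Sedrakyan's inequality gives `x_k² / 4 + (s - x_k)² / (2n) ≥ s² / (2(n+2))`, and
`s² / (2(n+2)) ≥ s² / (2(n+1)) - x̄²/2` because `n² ≤ (n+1)(n+2)`. Hence
`exp(-x̄²/2) m(x) ≤ √2 m(x_{k}) m(x_{k}ᶜ)` for every `k`, and summing over `k` gives the bound.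
-/

lemma stdNormalPDF_pos (u : ℝ) : 0 < stdNormalPDF u := by
  have := Real.pi_pos
  unfold stdNormalPDF
  positivity

lemma clusterMarginal_pos {n : ℕ} (x : Fin n → ℝ) (S : Finset (Fin n)) :
    0 < clusterMarginal x S := by
  have := prod_pos fun j (_ : j ∈ S) => stdNormalPDF_pos (x j)
  unfold clusterMarginal
  positivity

lemma crpWeight_nonneg {n t : ℕ} (A : Fin t → Finset (Fin n)) : 0 ≤ crpWeight A := by
  unfold crpWeight
  positivity

lemma sum_le_pJoint {n t : ℕ} (x : Fin n → ℝ) {s : Finset (Fin t → Finset (Fin n))}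
    (hs : s ⊆ orderedPartitions n t) :
    ∑ A ∈ s, crpWeight A * ∏ i, clusterMarginal x (A i) ≤ pJoint n t x :=
  sum_le_sum_of_subset_of_nonneg hs fun A _ _ =>
    mul_nonneg (crpWeight_nonneg A) (prod_nonneg fun i _ => (clusterMarginal_pos x (A i)).le)

lemma orderedPartitions_one {n : ℕ} (hn : n ≠ 0) :
    orderedPartitions n 1 = {fun _ => univ} := by
  ext A
  simp only [orderedPartitions, mem_filter, mem_univ, true_and, mem_singleton]
  constructor
  · rintro ⟨-, -, hcover⟩
    ext i a
    simpa [Fin.fin_one_eq_zero i, Subsingleton.elim _ (0 : Fin 1)] using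
      hcover.ge (mem_univ a)
  · rintro rfl
    exact ⟨fun _ => univ_nonempty_iff.2 ⟨⟨0, Nat.pos_of_ne_zero hn⟩⟩,
      fun i j hij => absurd (Subsingleton.elim i j) hij, by simp⟩

lemma pJoint_one {n : ℕ} (hn : n ≠ 0) (x : Fin n → ℝ) :
    pJoint n 1 x = clusterMarginal x univ / n := by
  have hfact : (n.factorial : ℝ) = n * (n - 1).factorial := by
    exact_mod_cast (Nat.mul_factorial_pred hn).symm
  have : ((n - 1).factorial : ℝ) ≠ 0 := by positivity
  simp only [pJoint, orderedPartitions_one hn, sum_singleton, crpWeight, Fin.prod_univ_one,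
    card_univ, Fintype.card_fin, Nat.factorial_one, Nat.cast_one, mul_one, hfact]
  field_simp

def singletonSplit {n : ℕ} (k : Fin n) : Fin 2 → Finset (Fin n) := ![{k}, {k}ᶜ]

lemma singletonSplit_injective {n : ℕ} : Function.Injective (singletonSplit (n := n)) :=
  fun k k' h => by simpa [singletonSplit] using congrFun h 0

lemma singletonSplit_mem_orderedPartitions {n : ℕ} (hn : 2 ≤ n) (k : Fin n) :
    singletonSplit k ∈ orderedPartitions n 2 := by
  have hcompl : ({k}ᶜ : Finset (Fin n)).Nonempty := by
    rw [← card_pos, card_compl, card_singleton, Fintype.card_fin]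
    omega
  simp only [orderedPartitions, mem_filter, mem_univ, true_and]
  refine ⟨fun i => ?_, fun i j hij => ?_, ?_⟩
  · fin_cases i
    exacts [singleton_nonempty k, hcompl]
  · fin_cases i <;> fin_cases j
    all_goals first
      | exact absurd rfl hij
      | exact disjoint_compl_right
      | exact disjoint_compl_left
  · ext a
    simp [singletonSplit, Fin.exists_fin_two, em]

lemma crpWeight_singletonSplit {n : ℕ} (hn : 2 ≤ n) (k : Fin n) :
    crpWeight (singletonSplit k) = 1 / (2 * n * (n - 1)) := by
  obtain ⟨m, rfl⟩ : ∃ m, n = m + 2 := ⟨n - 2, by omega⟩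
  have hcard : ({k}ᶜ : Finset (Fin (m + 2))).card = m + 1 := by
    rw [card_compl, card_singleton, Fintype.card_fin]
    omega
  have : (m.factorial : ℝ) ≠ 0 := by positivity
  simp only [crpWeight, Fin.prod_univ_two, singletonSplit, Matrix.cons_val_zero,
    Matrix.cons_val_one, card_singleton, hcard, Nat.factorial_succ, Nat.factorial_zero]
  push_cast
  rw [show (m : ℝ) + 2 - 1 = m + 1 by ring]
  field_simp
  ring

open Real in
lemma clusterMarginal_mul_compl {n : ℕ} (x : Fin n → ℝ) (S : Finset (Fin n)) :
    clusterMarginal x S * clusterMarginal x Sᶜ =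
      (√(S.card + 1) * √(Sᶜ.card + 1))⁻¹ * (∏ j, stdNormalPDF (x j)) *
        exp ((∑ j ∈ S, x j) ^ 2 / (2 * (S.card + 1)) +
          (∑ j ∈ Sᶜ, x j) ^ 2 / (2 * (Sᶜ.card + 1))) := by
  rw [clusterMarginal, clusterMarginal, ← prod_mul_prod_compl S, exp_add, mul_inv]
  ring

lemma add_sq_div_add_le {a b : ℝ} (ha : 0 < a) (hb : 0 < b) (u v : ℝ) :
    (u + v) ^ 2 / (a + b) ≤ u ^ 2 / a + v ^ 2 / b := by
  simpa [Fin.sum_univ_two] using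
    sq_sum_div_le_sum_sq_div univ ![u, v] (g := ![a, b]) (by simp [Fin.forall_fin_two, ha, hb])

lemma sq_div_sub_sq_mean_le {N : ℝ} (hN : 0 < N) (s : ℝ) :
    s ^ 2 / (2 * (N + 1)) - (s / N) ^ 2 / 2 ≤ s ^ 2 / (2 * (N + 2)) := by
  have hinv : 1 / (N + 1) - 1 / (N + 2) ≤ 1 / N ^ 2 := by
    rw [div_sub_div _ _ (by positivity) (by positivity),
      div_le_div_iff₀ (by positivity) (by positivity)]
    nlinarith
  have := mul_le_mul_of_nonneg_left hinv (sq_nonneg s)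
  rw [div_pow]
  field_simp at this ⊢
  linarith

open Real in
lemma exp_neg_sq_mean_mul_clusterMarginal_univ_le {n : ℕ} (x : Fin n → ℝ) (k : Fin n) :
    exp (-(((∑ j, x j) / n) ^ 2) / 2) * clusterMarginal x univ ≤
      √2 * (clusterMarginal x {k} * clusterMarginal x {k}ᶜ) := by
  have hsum : ∑ j ∈ {k}ᶜ, x j = (∑ j, x j) - x k := by
    rw [← sum_add_sum_compl {k} x, sum_singleton]
    ring
  set s := ∑ j, x j
  have hn : (0 : ℝ) < n := by exact_mod_cast k.pos
  have hcard : (({k}ᶜ : Finset (Fin n)).card : ℝ) + 1 = n := by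
    have := card_compl_add_card ({k} : Finset (Fin n))
    rw [card_singleton, Fintype.card_fin] at this
    exact_mod_cast this
  have hexp : s ^ 2 / (2 * (n + 1)) + -((s / n) ^ 2) / 2 ≤
      x k ^ 2 / (2 * 2) + (s - x k) ^ 2 / (2 * n) :=
    calc
      _ ≤ s ^ 2 / (2 * (n + 2)) := by linarith [sq_div_sub_sq_mean_le hn s]
      _ = (x k + (s - x k)) ^ 2 / (2 * 2 + 2 * n) := by ring_nf
      _ ≤ _ := add_sq_div_add_le (by norm_num) (by positivity) _ _
  rw [clusterMarginal_mul_compl, hcard, hsum, card_singleton, sum_singleton, Nat.cast_one,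
    one_add_one_eq_two, clusterMarginal, card_univ, Fintype.card_fin]
  calc
    _ = (√(n + 1))⁻¹ * (∏ j, stdNormalPDF (x j)) *
        exp (s ^ 2 / (2 * (n + 1)) + -((s / n) ^ 2) / 2) := by rw [exp_add]; ring
    _ ≤ (√n)⁻¹ * (∏ j, stdNormalPDF (x j)) *
        exp (x k ^ 2 / (2 * 2) + (s - x k) ^ 2 / (2 * n)) := by
      have := prod_pos fun j (_ : j ∈ univ) => stdNormalPDF_pos (x j)
      gcongr
      linarith
    _ = _ := by field_simp

lemma sum_singletonSplit_le_pJoint_two {n : ℕ} (hn : 2 ≤ n) (x : Fin n → ℝ) :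
    ∑ k, clusterMarginal x {k} * clusterMarginal x {k}ᶜ / (2 * n * (n - 1)) ≤ pJoint n 2 x :=
  calc
    _ = ∑ A ∈ univ.image singletonSplit, crpWeight A * ∏ i, clusterMarginal x (A i) := by
      rw [sum_image fun k _ k' _ h => singletonSplit_injective h]
      refine sum_congr rfl fun k _ => ?_
      rw [crpWeight_singletonSplit hn, Fin.prod_univ_two]
      simp only [singletonSplit, Matrix.cons_val_zero, Matrix.cons_val_one]
      ring
    _ ≤ pJoint n 2 x := sum_le_pJoint x <| image_subset_iff.2 fun k _ =>
      singletonSplit_mem_orderedPartitions hn k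

open Real in
lemma exp_neg_sq_mean_mul_clusterMarginal_univ_div_le {n : ℕ} (hn : 2 ≤ n) (x : Fin n → ℝ)
    (k : Fin n) :
    exp (-(((∑ j, x j) / n) ^ 2) / 2) * clusterMarginal x univ / (2 * √2 * n ^ 2) ≤
      clusterMarginal x {k} * clusterMarginal x {k}ᶜ / (2 * n * (n - 1)) := by
  have hN : (2 : ℝ) ≤ n := by exact_mod_cast hn
  have := clusterMarginal_pos x {k}
  have := clusterMarginal_pos x {k}ᶜ
  calc
    _ ≤ √2 * (clusterMarginal x {k} * clusterMarginal x {k}ᶜ) / (2 * √2 * n ^ 2) := by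
      gcongr ?_ / _
      exact exp_neg_sq_mean_mul_clusterMarginal_univ_le x k
    _ = clusterMarginal x {k} * clusterMarginal x {k}ᶜ / (2 * n * n) := by
      field_simp
    _ ≤ _ := by
      have : 0 < 2 * (n : ℝ) * (n - 1) := by nlinarith
      gcongr
      linarith

/-- For `n ≥ 2` and `x ∈ ℝⁿ`, `p(x, T_n = 1) = m(x_{1:n})/n` and
`p(x, T_n = 2) ≥ (1/(2√2)) exp(-x̄_n²/2) p(x, T_n = 1)` where `x̄_n = (1/n) ∑_j x_j`;
in particular the ratio `p(x, T_n = 2)/p(x, T_n = 1)` is bounded below by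
`(1/(2√2)) exp(-x̄_n²/2)`. -/
theorem two_cluster_vs_one_cluster (n : ℕ) (hn : 2 ≤ n) (x : Fin n → ℝ) :
    pJoint n 1 x = clusterMarginal x Finset.univ / n ∧
    pJoint n 2 x ≥
      1 / (2 * Real.sqrt 2) * Real.exp (-(((∑ j, x j) / n) ^ 2) / 2) * pJoint n 1 x := by
  have hn0 : n ≠ 0 := by omega
  refine ⟨pJoint_one hn0 x, ?_⟩
  calc
    _ = ∑ _k : Fin n, Real.exp (-(((∑ j, x j) / n) ^ 2) / 2) * clusterMarginal x univ /
          (2 * Real.sqrt 2 * n ^ 2) := by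
      rw [pJoint_one hn0, sum_const, card_univ, Fintype.card_fin, nsmul_eq_mul]
      field_simp
    _ ≤ ∑ k, clusterMarginal x {k} * clusterMarginal x {k}ᶜ / (2 * n * (n - 1)) :=
      sum_le_sum fun k _ => exp_neg_sq_mean_mul_clusterMarginal_univ_div_le hn x k
    _ ≤ pJoint n 2 x := sum_singletonSplit_le_pJoint_two hn x
end

section
/- Let n ≥ 2 be an integer and x = (x_1,…,x_n) ∈ ℝ^n. Define R_2(x) = n^{3/2} · p(x, T_n = 2) / p_0(x), where p_0(x) = ∏_{j=1}^n φ(x_j). Then R_2(x) ≥ ∑_{k=1}^{n−1} ( n / (2k(n−k)) ) · U_k(x), where U_k(x) = (1 / C(n,k)) ∑_{S ⊆ {1,…,n}, |S| = k} h(x_S) is the U-statistic with kernel h(x_S) = (|S|+1)^{−1/2} exp( (∑_{j∈S} x_j)² / (2(|S|+1)) ) and C(n,k) is the binomial coefficient. -/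
open MeasureTheory Filter Finset

/-- `p₀(x) = ∏_j φ(x_j)`, the density of i.i.d. standard normal data. -/
noncomputable def pZero {n : ℕ} (x : Fin n → ℝ) : ℝ := ∏ j, stdNormalPDF (x j)

/-- `R_t(x_{1:n}) = n^{3/2} · p(x_{1:n}, T_n = t) / p₀(x_{1:n})`. -/
noncomputable def Rstat (t n : ℕ) (x : Fin n → ℝ) : ℝ :=
  (n : ℝ) ^ (3 / 2 : ℝ) * pJoint n t x / pZero x

/-- The kernel `h(x_S) = m(x_S) / ∏_{j∈S} φ(x_j)
  = (|S|+1)^{-1/2} exp((∑_{j∈S} x_j)²/(2(|S|+1)))`. -/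
noncomputable def hKernel {n : ℕ} (x : Fin n → ℝ) (S : Finset (Fin n)) : ℝ :=
  (Real.sqrt (S.card + 1))⁻¹ * Real.exp ((∑ j ∈ S, x j) ^ 2 / (2 * (S.card + 1)))

/-- The U-statistic `U_k(x) = (1/C(n,k)) ∑_{S ⊆ {1,…,n}, |S| = k} h(x_S)`. -/
noncomputable def Ustat (n k : ℕ) (x : Fin n → ℝ) : ℝ :=
  (1 / (n.choose k : ℝ)) *
    ∑ S ∈ Finset.powersetCard k (Finset.univ : Finset (Fin n)), hKernel x S

/-! Since `m(x_S) m(x_Sᶜ) = p₀(x) h(x_S) h(x_Sᶜ)`, `R₂(x)` is `n^{3/2}` times the sum, over the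
nonempty proper subsets `S`, of `p(S, Sᶜ) h(x_S) h(x_Sᶜ)`, where
`p(S, Sᶜ) = (k-1)!(n-k-1)!/(2 n!) = 1/(2k(n-k) C(n,k))` for `k = |S|`. The bound
`h(x_Sᶜ) ≥ (n-k+1)^{-1/2} ≥ n^{-1/2}` leaves `n/(2k(n-k)) · h(x_S)/C(n,k)`, and grouping the
subsets by size gives the U-statistics. -/

open Finset
open scoped Nat

lemma Nat.choose_mul_factorial_pred_mul_factorial_pred {n k : ℕ} (hk : 0 < k) (hkn : k < n) :
    n.choose k * (k * (k - 1)!) * ((n - k) * (n - k - 1)!) = n ! := by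
  rw [Nat.mul_factorial_pred hk.ne', Nat.mul_factorial_pred (Nat.sub_ne_zero_of_lt hkn)]
  exact Nat.choose_mul_factorial_mul_factorial hkn.le

def twoBlockSubsets (n : ℕ) : Finset (Finset (Fin n)) :=
  univ.filter fun S => S.Nonempty ∧ Sᶜ.Nonempty

section

variable {n : ℕ}

lemma mem_twoBlockSubsets_iff_card {S : Finset (Fin n)} :
    S ∈ twoBlockSubsets n ↔ S.card ∈ Icc 1 (n - 1) := by
  simp only [twoBlockSubsets, mem_filter, mem_univ, true_and, mem_Icc, ← card_pos,
    card_compl, Fintype.card_fin]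
  have := S.card_le_univ.trans_eq (Fintype.card_fin n)
  omega

lemma mem_orderedPartitions_two_iff {A : Fin 2 → Finset (Fin n)} :
    A ∈ orderedPartitions n 2 ↔ (A 0).Nonempty ∧ (A 0)ᶜ.Nonempty ∧ A 1 = (A 0)ᶜ := by
  have hunion : univ.biUnion A = A 1 ∪ A 0 := by
    ext a; simp [Fin.exists_fin_two, or_comm]
  have hcompl : A 1 = (A 0)ᶜ ↔ Disjoint (A 0) (A 1) ∧ A 1 ∪ A 0 = univ := by
    rw [eq_compl_iff_isCompl, isCompl_iff, codisjoint_iff, disjoint_comm]; rfl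
  simp only [orderedPartitions, mem_filter, mem_univ, true_and, Fin.forall_fin_two, hunion]
  constructor
  · rintro ⟨⟨h0, h1⟩, ⟨⟨-, h01⟩, -⟩, hcov⟩
    have h := hcompl.2 ⟨h01 (by decide), hcov⟩
    exact ⟨h0, h ▸ h1, h⟩
  · rintro ⟨h0, hc, h⟩
    obtain ⟨hd, hcov⟩ := hcompl.1 h
    exact ⟨⟨h0, h ▸ hc⟩, ⟨⟨by simp, fun _ => hd⟩, fun _ => hd.symm, by simp⟩, hcov⟩

lemma pJoint_two (x : Fin n → ℝ) :
    pJoint n 2 x = ∑ S ∈ twoBlockSubsets n,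
      crpWeight ![S, Sᶜ] * (clusterMarginal x S * clusterMarginal x Sᶜ) := by
  refine sum_nbij' (· 0) (fun S => ![S, Sᶜ]) ?_ ?_ ?_ ?_ ?_
  · intro A hA
    obtain ⟨h0, hc, -⟩ := mem_orderedPartitions_two_iff.1 hA
    simp [twoBlockSubsets, h0, hc]
  · intro S hS
    simp only [twoBlockSubsets, mem_filter, mem_univ, true_and] at hS
    simpa [mem_orderedPartitions_two_iff] using hS
  · intro A hA
    obtain ⟨-, -, h1⟩ := mem_orderedPartitions_two_iff.1 hA
    ext i : 1
    fin_cases i <;> simp [h1]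
  · intro S _
    rfl
  · intro A hA
    obtain ⟨-, -, h1⟩ := mem_orderedPartitions_two_iff.1 hA
    have hA : A = ![A 0, (A 0)ᶜ] := by
      ext i : 1
      fin_cases i <;> simp [h1]
    rw [hA, Fin.prod_univ_two]
    rfl

lemma clusterMarginal_eq_mul_hKernel (x : Fin n → ℝ) (S : Finset (Fin n)) :
    clusterMarginal x S = (∏ j ∈ S, stdNormalPDF (x j)) * hKernel x S := by
  unfold clusterMarginal hKernel
  ring

lemma pZero_pos (x : Fin n → ℝ) : 0 < pZero x :=
  prod_pos fun _ _ => by unfold stdNormalPDF; positivity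

lemma Rstat_two_eq (x : Fin n → ℝ) :
    Rstat 2 n x = (n : ℝ) ^ (3 / 2 : ℝ) *
      ∑ S ∈ twoBlockSubsets n, crpWeight ![S, Sᶜ] * (hKernel x S * hKernel x Sᶜ) := by
  have hsplit : ∀ S : Finset (Fin n),
      clusterMarginal x S * clusterMarginal x Sᶜ = pZero x * (hKernel x S * hKernel x Sᶜ) := by
    intro S
    rw [clusterMarginal_eq_mul_hKernel, clusterMarginal_eq_mul_hKernel, pZero,
      ← prod_mul_prod_compl S]
    ring
  simp only [Rstat, pJoint_two, hsplit, mul_left_comm _ (pZero x), ← mul_sum]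
  field_simp [(pZero_pos x).ne']

lemma crpWeight_two_block {S : Finset (Fin n)} (hS : S ∈ twoBlockSubsets n) :
    crpWeight ![S, Sᶜ] =
      1 / (2 * (S.card : ℝ) * ((n : ℝ) - S.card) * (n.choose S.card : ℝ)) := by
  obtain ⟨hk, hkn⟩ := mem_Icc.1 (mem_twoBlockSubsets_iff_card.1 hS)
  have hkn : S.card < n := by omega
  have hfact := Nat.choose_mul_factorial_pred_mul_factorial_pred hk hkn
  rw [← Nat.cast_inj (R := ℝ)] at hfact
  push_cast [hkn.le] at hfact
  rw [crpWeight, Fin.prod_univ_two]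
  simp only [Matrix.cons_val_zero, Matrix.cons_val_one, card_compl, Fintype.card_fin,
    Nat.factorial_two]
  rw [← hfact]
  have : (n : ℝ) - S.card ≠ 0 := sub_ne_zero.2 (by exact_mod_cast hkn.ne')
  field_simp
  push_cast
  ring

lemma inv_sqrt_card_add_one_le_hKernel (x : Fin n → ℝ) (S : Finset (Fin n)) :
    (√(S.card + 1))⁻¹ ≤ hKernel x S :=
  le_mul_of_one_le_right (by positivity) (Real.one_le_exp (by positivity))

lemma Ustat_summand_le_Rstat_two_summand (x : Fin n → ℝ) {S : Finset (Fin n)}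
    (hS : S ∈ twoBlockSubsets n) :
    (n : ℝ) / (2 * (S.card : ℝ) * ((n : ℝ) - S.card)) * (1 / (n.choose S.card : ℝ)) *
        hKernel x S ≤
      (n : ℝ) ^ (3 / 2 : ℝ) * (crpWeight ![S, Sᶜ] * (hKernel x S * hKernel x Sᶜ)) := by
  obtain ⟨hk, hkn⟩ := mem_Icc.1 (mem_twoBlockSubsets_iff_card.1 hS)
  have hn : (0 : ℝ) < n := by exact_mod_cast (show 0 < n by omega)
  have hcompl : 1 ≤ √n * hKernel x Sᶜ :=
    calc (1 : ℝ) = √n * (√n)⁻¹ := (mul_inv_cancel₀ (Real.sqrt_pos.2 hn).ne').symm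
      _ ≤ √n * (√(Sᶜ.card + 1))⁻¹ := by
        gcongr
        rw [card_compl, Fintype.card_fin]
        exact_mod_cast (show n - S.card + 1 ≤ n by omega)
      _ ≤ √n * hKernel x Sᶜ := by gcongr; exact inv_sqrt_card_add_one_le_hKernel x Sᶜ
  have h32 : (n : ℝ) ^ (3 / 2 : ℝ) = n * √n := by
    rw [show (3 / 2 : ℝ) = 1 + 1 / 2 by norm_num, Real.rpow_add hn, Real.rpow_one,
      Real.sqrt_eq_rpow]
  have hw : 0 ≤ 1 / (2 * (S.card : ℝ) * ((n : ℝ) - S.card) * (n.choose S.card : ℝ)) := by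
    have hnk : (S.card : ℝ) ≤ n := by exact_mod_cast (show S.card ≤ n by omega)
    have := sub_nonneg.2 hnk
    positivity
  have hh : 0 ≤ hKernel x S := by unfold hKernel; positivity
  rw [crpWeight_two_block hS, h32, div_mul_div_comm, mul_one, ← mul_one_div]
  calc _ ≤ n * (1 / (2 * (S.card : ℝ) * ((n : ℝ) - S.card) * (n.choose S.card : ℝ))) *
        hKernel x S * (√n * hKernel x Sᶜ) := le_mul_of_one_le_right (by positivity) hcompl
    _ = _ := by ring

lemma sum_Icc_sum_powersetCard_eq_sum_twoBlockSubsets {M : Type*} [AddCommMonoid M]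
    (f : Finset (Fin n) → M) :
    ∑ k ∈ Icc 1 (n - 1), ∑ S ∈ powersetCard k univ, f S = ∑ S ∈ twoBlockSubsets n, f S := by
  rw [← sum_fiberwise_of_maps_to (g := card) fun S hS => mem_twoBlockSubsets_iff_card.1 hS]
  refine sum_congr rfl fun k hk => ?_
  congr 1
  ext S
  simp only [mem_powersetCard_univ, mem_filter, mem_twoBlockSubsets_iff_card]
  constructor
  · rintro rfl; exact ⟨hk, rfl⟩
  · exact And.right

end

theorem Rstat_two_ge_sum_Ustat_general (n : ℕ) (x : Fin n → ℝ) :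
    Rstat 2 n x ≥
      ∑ k ∈ Finset.Icc 1 (n - 1),
        (n : ℝ) / (2 * (k : ℝ) * ((n : ℝ) - (k : ℝ))) * Ustat n k x := by
  rw [ge_iff_le, Rstat_two_eq, mul_sum]
  calc _ = ∑ k ∈ Icc 1 (n - 1), ∑ S ∈ powersetCard k univ,
        (n : ℝ) / (2 * (S.card : ℝ) * ((n : ℝ) - S.card)) * (1 / (n.choose S.card : ℝ)) *
          hKernel x S := by
        refine sum_congr rfl fun k _ => ?_
        rw [Ustat, mul_sum, mul_sum]
        refine sum_congr rfl fun S hS => ?_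
        rw [mem_powersetCard_univ.1 hS]
        ring
    _ = _ := sum_Icc_sum_powersetCard_eq_sum_twoBlockSubsets _
    _ ≤ _ := sum_le_sum fun S hS => Ustat_summand_le_Rstat_two_summand x hS

/-- For `n ≥ 2` and `x ∈ ℝⁿ`,
`R₂(x) ≥ ∑_{k=1}^{n-1} (n/(2k(n-k))) U_k(x)`. -/
theorem Rstat_two_ge_sum_Ustat (n : ℕ) (hn : 2 ≤ n) (x : Fin n → ℝ) :
    Rstat 2 n x ≥
      ∑ k ∈ Finset.Icc 1 (n - 1),
        (n : ℝ) / (2 * (k : ℝ) * ((n : ℝ) - (k : ℝ))) * Ustat n k x :=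
  Rstat_two_ge_sum_Ustat_general n x
end
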